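/- arXiv:2408.00685 — 11 statements merged into one kernel-verified Lean document; each statement's English description precedes it below -/
import Mathlib

section
/- Let X be a real Banach space and let x, y ∈ X be nonzero. There exist λ > 0 and r with 0 < r ≤ λ‖x‖ such that ‖λx − y‖ < r (i.e., y lies in a ball centered at λx on the positive ray of x which does not contain 0) if and only if ρ'₋(x, y) > 0. -/
open Metric Filter Set Topology

/-- For nonzero x, y in a real Banach space, y lies in some open ball
centered at a positive multiple of x that avoids the origin iff ρ'₋(x,y) > 0,
where ρ'₋(x,y) is the left norm derivative, given here as the limit of the
difference quotients as t → 0⁻. -/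
theorem stmt0 {X : Type*} [NormedAddCommGroup X] [NormedSpace ℝ X] [CompleteSpace X]
    (x y : X) (hx : x ≠ 0) (hy : y ≠ 0) (ρm : ℝ)
    (hρ : Tendsto (fun t : ℝ => ‖x‖ * (‖x + t • y‖ - ‖x‖) / t) (𝓝[<] (0 : ℝ)) (𝓝 ρm)) :
    (∃ l r : ℝ, 0 < l ∧ 0 < r ∧ r ≤ l * ‖x‖ ∧ ‖l • x - y‖ < r) ↔ 0 < ρm := by
  have hxn : (0:ℝ) < ‖x‖ := norm_pos_iff.mpr hx
  set f : ℝ → ℝ := fun t => ‖x + t • y‖ with hf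
  have hconv : ConvexOn ℝ univ f := by
    refine ⟨convex_univ, fun a _ b _ p q hp hq hpq => ?_⟩
    have : x + (p * a + q * b) • y = p • (x + a • y) + q • (x + b • y) := by
      rw [smul_add, smul_add, ← add_assoc]
      rw [add_right_comm (p • x), add_assoc]
      congr 1
      · rw [← add_smul, hpq, one_smul]
      · rw [smul_smul, smul_smul, add_smul]
    simp only [f, smul_eq_mul, this]
    calc ‖p • (x + a • y) + q • (x + b • y)‖
        ≤ ‖p • (x + a • y)‖ + ‖q • (x + b • y)‖ := norm_add_le _ _
      _ = p * ‖x + a • y‖ + q * ‖x + b • y‖ := by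
          rw [norm_smul, norm_smul, Real.norm_of_nonneg hp, Real.norm_of_nonneg hq]
  have hf0 : f 0 = ‖x‖ := by simp [f]
  constructor
  · rintro ⟨l, r, hl, hr, hrl, hlt⟩
    -- set t₀ = -1/l
    set t₀ : ℝ := -(1/l) with ht₀
    have ht₀neg : t₀ < 0 := neg_neg_iff_pos.mpr (by positivity)
    have hft₀ : f t₀ < ‖x‖ := by
      have heq : x + t₀ • y = (1/l) • (l • x - y) := by
        rw [smul_sub, smul_smul, one_div, inv_mul_cancel₀ hl.ne', one_smul, ht₀]
        module
      show ‖x + t₀ • y‖ < ‖x‖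
      rw [heq, norm_smul, Real.norm_of_nonneg (by positivity : (0:ℝ) ≤ 1/l)]
      calc (1/l) * ‖l • x - y‖ < (1/l) * r := by
            exact mul_lt_mul_of_pos_left hlt (by positivity)
        _ ≤ (1/l) * (l * ‖x‖) := by
            exact mul_le_mul_of_nonneg_left hrl (by positivity)
        _ = ‖x‖ := by field_simp
    -- the slope at t₀ is positive
    have hslope : 0 < (f t₀ - f 0) / (t₀ - 0) := by
      apply div_pos_of_neg_of_neg
      · rw [hf0]; linarith
      · linarith
    set c : ℝ := ‖x‖ * ((f t₀ - f 0) / (t₀ - 0)) with hc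
    have hcpos : 0 < c := mul_pos hxn hslope
    -- eventually the difference quotient is ≥ slope at t₀
    have hev : ∀ᶠ t in 𝓝[<] (0:ℝ), c ≤ ‖x‖ * (f t - ‖x‖) / t := by
      filter_upwards [Ioo_mem_nhdsLT_of_mem (by constructor <;> simp [ht₀neg] : (0:ℝ) ∈ Ioc t₀ 0)]
        with t ht
      have h1 : (f t₀ - f 0) / (t₀ - 0) ≤ (f t - f 0) / (t - 0) :=
        hconv.secant_mono (mem_univ 0) (mem_univ t₀) (mem_univ t)
          ht₀neg.ne ht.2.ne ht.1.le
      rw [hc, mul_div_assoc]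
      have h2 : (f t₀ - f 0) / (t₀ - 0) ≤ (f t - ‖x‖) / t := by
        rw [← hf0]; simpa using h1
      exact mul_le_mul_of_nonneg_left h2 hxn.le
    have := ge_of_tendsto hρ hev
    linarith
  · intro hρm
    have hev : ∀ᶠ t in 𝓝[<] (0:ℝ), 0 < ‖x‖ * (‖x + t • y‖ - ‖x‖) / t :=
      hρ.eventually (eventually_gt_nhds hρm)
    obtain ⟨t, htpos, htneg⟩ := (hev.and self_mem_nhdsWithin).exists
    have htneg : t < 0 := htneg
    have hft : ‖x + t • y‖ < ‖x‖ := by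
      by_contra h
      push_neg at h
      have : ‖x‖ * (‖x + t • y‖ - ‖x‖) / t ≤ 0 := by
        apply div_nonpos_of_nonneg_of_nonpos
        · exact mul_nonneg hxn.le (by linarith)
        · linarith
      linarith
    have hlpos : (0:ℝ) < -(1/t) := by
      rw [neg_pos]
      exact div_neg_of_pos_of_neg one_pos htneg
    refine ⟨-(1/t), -(1/t) * ‖x‖, hlpos, mul_pos hlpos hxn, le_refl _, ?_⟩
    have heq : (-(1/t)) • x - y = (-(1/t)) • (x + t • y) := by
      rw [smul_add, smul_smul]
      have h3 : -(1/t) * t = -1 := by field_simp [htneg.ne]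
      rw [h3]; module
    rw [heq, norm_smul, Real.norm_of_nonneg hlpos.le]
    exact mul_lt_mul_of_pos_left hft hlpos
end

section
/- Let X be a real Banach space and let x, y ∈ X be nonzero. There exist λ < 0 and r with 0 < r ≤ |λ|‖x‖ such that ‖λx − y‖ < r if and only if ρ'₊(x, y) < 0. -/
/-!
Substituting `l = -t⁻¹`, the ball condition says exactly that `‖x + t • y‖ < ‖x‖` for some
`t > 0`. Since `t ↦ ‖x + t • y‖` is convex, its difference quotients at `0` decrease as
`t ↓ 0`, so `ρ'₊(x, y)` is at most `‖x‖` times each of them; hence such a `t` exists iff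
`ρ'₊(x, y) < 0`.
-/

open Metric Filter Set Topology

section

variable {E : Type*} [SeminormedAddCommGroup E] [NormedSpace ℝ E]

lemma convexOn_norm_add_smul (x y : E) : ConvexOn ℝ univ fun t : ℝ => ‖x + t • y‖ := by
  simpa [Function.comp_def, AffineMap.lineMap_apply, add_comm] using
    (convexOn_norm convex_univ).comp_affineMap (AffineMap.lineMap (k := ℝ) x (x + y))

lemma norm_neg_inv_smul_sub (x y : E) {t : ℝ} (ht : 0 < t) :
    ‖(-t⁻¹) • x - y‖ = t⁻¹ * ‖x + t • y‖ := by
  have : (-t⁻¹) • x - y = (-t⁻¹) • (x + t • y) := by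
    rw [smul_add, smul_smul, neg_mul, inv_mul_cancel₀ ht.ne']
    module
  rw [this, norm_smul, norm_neg, norm_inv, Real.norm_of_nonneg ht.le]

lemma exists_ball_neg_smul_iff (x y : E) :
    (∃ l r : ℝ, l < 0 ∧ 0 < r ∧ r ≤ |l| * ‖x‖ ∧ ‖l • x - y‖ < r) ↔
      ∃ t > (0 : ℝ), ‖x + t • y‖ < ‖x‖ := by
  constructor
  · rintro ⟨l, r, hl, hr, hrx, hlr⟩
    obtain ⟨t, ht, rfl⟩ : ∃ t > 0, l = -t⁻¹ := ⟨-l⁻¹, by simpa using hl, by simp⟩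
    rw [norm_neg_inv_smul_sub x y ht] at hlr
    rw [abs_neg, abs_inv, abs_of_pos ht] at hrx
    refine ⟨t, ht, ?_⟩
    calc ‖x + t • y‖ < t * r := by rwa [← inv_mul_lt_iff₀ ht]
      _ ≤ t * (t⁻¹ * ‖x‖) := by gcongr
      _ = ‖x‖ := by field_simp
  · rintro ⟨t, ht, hlt⟩
    refine ⟨-t⁻¹, t⁻¹ * ‖x‖, by simpa using ht, ?_, by simp [abs_of_pos ht], ?_⟩
    · have : 0 < ‖x‖ := (norm_nonneg _).trans_lt hlt
      positivity
    · rw [norm_neg_inv_smul_sub x y ht]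
      gcongr

lemma norm_mul_norm_add_smul_sub_div_neg_iff (x y : E) {t : ℝ} (ht : 0 < t) :
    ‖x‖ * (‖x + t • y‖ - ‖x‖) / t < 0 ↔ ‖x + t • y‖ < ‖x‖ := by
  rw [div_lt_iff₀ ht, zero_mul]
  constructor
  · intro h
    by_contra! hle
    exact (mul_nonneg (norm_nonneg x) (sub_nonneg.2 hle)).not_gt h
  · intro h
    exact mul_neg_of_pos_of_neg ((norm_nonneg _).trans_lt h) (sub_neg.2 h)

lemma le_of_tendsto_norm_add_smul_slope (x y : E) {ρ : ℝ}
    (hρ : Tendsto (fun t : ℝ => ‖x‖ * (‖x + t • y‖ - ‖x‖) / t) (𝓝[>] 0) (𝓝 ρ)) {t : ℝ}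
    (ht : 0 < t) : ρ ≤ ‖x‖ * (‖x + t • y‖ - ‖x‖) / t := by
  refine le_of_tendsto hρ ?_
  filter_upwards [Ioc_mem_nhdsGT ht] with s hs
  have := (convexOn_norm_add_smul x y).secant_mono (mem_univ 0) (mem_univ s) (mem_univ t)
    hs.1.ne' ht.ne' hs.2
  simp only [zero_smul, add_zero, sub_zero] at this
  simp only [mul_div_assoc]
  gcongr
end

theorem stmt1_general {X : Type*} [NormedAddCommGroup X] [NormedSpace ℝ X]
    (x y : X) (ρp : ℝ)
    (hρ : Tendsto (fun t : ℝ => ‖x‖ * (‖x + t • y‖ - ‖x‖) / t) (𝓝[>] (0 : ℝ)) (𝓝 ρp)) :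
    (∃ l r : ℝ, l < 0 ∧ 0 < r ∧ r ≤ |l| * ‖x‖ ∧ ‖l • x - y‖ < r) ↔ ρp < 0 := by
  rw [exists_ball_neg_smul_iff]
  constructor
  · rintro ⟨t, ht, hlt⟩
    exact (le_of_tendsto_norm_add_smul_slope x y hρ ht).trans_lt
      ((norm_mul_norm_add_smul_sub_div_neg_iff x y ht).2 hlt)
  · intro hρp
    obtain ⟨t, hneg, ht⟩ := ((hρ.eventually (eventually_lt_nhds hρp)).and self_mem_nhdsWithin).exists
    exact ⟨t, ht, (norm_mul_norm_add_smul_sub_div_neg_iff x y ht).1 hneg⟩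

/-- For nonzero x, y in a real Banach space, y lies in some open ball
centered at a negative multiple of x that avoids the origin iff ρ'₊(x,y) < 0,
where ρ'₊(x,y) is the right norm derivative. -/
theorem stmt1 {X : Type*} [NormedAddCommGroup X] [NormedSpace ℝ X] [CompleteSpace X]
    (x y : X) (hx : x ≠ 0) (hy : y ≠ 0) (ρp : ℝ)
    (hρ : Tendsto (fun t : ℝ => ‖x‖ * (‖x + t • y‖ - ‖x‖) / t) (𝓝[>] (0 : ℝ)) (𝓝 ρp)) :
    (∃ l r : ℝ, l < 0 ∧ 0 < r ∧ r ≤ |l| * ‖x‖ ∧ ‖l • x - y‖ < r) ↔ ρp < 0 :=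
  stmt1_general x y ρp hρ
end

section
/- Let X be a real Banach space and x, y ∈ X nonzero. It cannot happen simultaneously that (a) there is a ball centered at λx with λ > 0 of radius at most ‖λx‖ containing y, and (b) there is a ball centered at μx with μ < 0 of radius at most ‖μx‖ containing y. -/
open Metric Filter Set Topology

/-- It cannot happen simultaneously that y is in an origin-avoiding ball
centered at a positive multiple of x and also in an origin-avoiding ball centered at a
negative multiple of x. -/
theorem stmt2 {X : Type*} [NormedAddCommGroup X] [NormedSpace ℝ X] [CompleteSpace X]
    (x y : X) (hx : x ≠ 0) (hy : y ≠ 0) :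
    ¬ ((∃ l r : ℝ, 0 < l ∧ 0 < r ∧ r ≤ ‖l • x‖ ∧ y ∈ ball (l • x) r) ∧
       (∃ μ s : ℝ, μ < 0 ∧ 0 < s ∧ s ≤ ‖μ • x‖ ∧ y ∈ ball (μ • x) s)) := by
  rintro ⟨⟨l, r, hl, hr, hrle, hyb⟩, ⟨μ, s, hμ, hs, hsle, hyb'⟩⟩
  have h1 : ‖y - l • x‖ < l * ‖x‖ := by
    have := mem_ball_iff_norm.mp hyb
    rw [norm_smul, Real.norm_of_nonneg hl.le] at hrle
    linarith
  have h2 : ‖y - μ • x‖ < -μ * ‖x‖ := by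
    have := mem_ball_iff_norm.mp hyb'
    rw [norm_smul, Real.norm_of_nonpos hμ.le] at hsle
    linarith
  have hkey : (l - μ) * ‖x‖ ≤ ‖y - μ • x‖ + ‖y - l • x‖ := by
    calc (l - μ) * ‖x‖ = ‖(l - μ) • x‖ := by
          rw [norm_smul, Real.norm_of_nonneg (by linarith)]
      _ = ‖(y - μ • x) - (y - l • x)‖ := by rw [sub_smul]; congr 1; abel
      _ ≤ ‖y - μ • x‖ + ‖y - l • x‖ := norm_sub_le _ _
  linarith
end

section
/- Let X be a real Banach space and x, y ∈ X nonzero. Then x is Birkhoff–James orthogonal to y (i.e., ‖x + λy‖ ≥ ‖x‖ for all real λ) if and only if there is no λ ≠ 0 and no r with 0 < r ≤ ‖λx‖ such that y ∈ B(λx, r). -/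
open Metric Filter Set Topology

/-- x is Birkhoff–James orthogonal to y iff there is no origin-avoiding
open ball centered at a nonzero multiple of x containing y. -/
theorem stmt3 {X : Type*} [NormedAddCommGroup X] [NormedSpace ℝ X] [CompleteSpace X]
    (x y : X) (hx : x ≠ 0) (hy : y ≠ 0) :
    (∀ t : ℝ, ‖x‖ ≤ ‖x + t • y‖) ↔
      ¬ (∃ l r : ℝ, l ≠ 0 ∧ 0 < r ∧ r ≤ ‖l • x‖ ∧ y ∈ ball (l • x) r) := by
  constructor
  · rintro h ⟨l, r, hl, hr, hrl, hball⟩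
    rw [mem_ball, dist_eq_norm] at hball
    have key : x + (-l⁻¹) • y = (-l⁻¹) • (y - l • x) := by
      match_scalars <;> field_simp
    have h1 := h (-l⁻¹)
    rw [key, norm_smul] at h1
    have h2 : ‖y - l • x‖ < ‖l • x‖ := lt_of_lt_of_le hball hrl
    rw [norm_smul] at h2
    have ha : (0:ℝ) < |l| := abs_pos.mpr hl
    have hia : ‖(-l⁻¹ : ℝ)‖ = |l|⁻¹ := by
      rw [Real.norm_eq_abs, abs_neg, abs_inv]
    rw [hia] at h1
    rw [Real.norm_eq_abs] at h2
    have : ‖x‖ < ‖x‖ := by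
      calc ‖x‖ ≤ |l|⁻¹ * ‖y - l • x‖ := h1
        _ < |l|⁻¹ * (|l| * ‖x‖) := by
            apply mul_lt_mul_of_pos_left h2 (by positivity)
        _ = ‖x‖ := by field_simp
    exact lt_irrefl _ this
  · intro h t
    by_contra hc
    push_neg at hc
    have ht : t ≠ 0 := by
      rintro rfl
      simp at hc
    apply h
    refine ⟨-t⁻¹, ‖(-t⁻¹) • x‖, by simpa using ht, ?_, le_refl _, ?_⟩
    · rw [norm_smul]
      have : (-t⁻¹ : ℝ) ≠ 0 := by simpa using ht
      exact mul_pos (norm_pos_iff.mpr this) (norm_pos_iff.mpr hx)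
    · rw [mem_ball, dist_eq_norm]
      have key : y - (-t⁻¹) • x = t⁻¹ • (x + t • y) := by
        match_scalars <;> field_simp
      rw [key, norm_smul, norm_smul]
      have hti : (0:ℝ) < ‖(t⁻¹ : ℝ)‖ := by
        simp [Real.norm_eq_abs, abs_pos, ht]
      have hn : ‖(-t⁻¹ : ℝ)‖ = ‖(t⁻¹ : ℝ)‖ := by simp
      rw [hn]
      exact mul_lt_mul_of_pos_left hc hti
end

section
/- Let X be a real Banach space and A ⊆ X a compact set not containing 0. Let f₁,…,f_m ∈ S_{X*} be weak*-exposed points of B_{X*} such that max{fᵢ(y) : 1 ≤ i ≤ m} > 0 for every y ∈ A. Then there exist x₁,…,x_m ∈ X, λ₁,…,λ_m > 0 and radii 0 < rᵢ ≤ λᵢ‖xᵢ‖ such that A ⊆ ⋃_{i=1}^m B(λᵢxᵢ, rᵢ), i.e., A has a ball-covering by m balls none of which contains 0. -/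
/-!
If `x` exposes `f` and `f y > 0`, then `‖x - t • y‖ < ‖x‖` for some `t > 0`, i.e. `y` lies in the
ball `B(t⁻¹ • x, t⁻¹‖x‖)`, which misses the origin. Otherwise Hahn–Banach gives, for each `t > 0`,
a functional of the dual unit ball that is nonpositive at `y` and norms `x` up to `t‖y‖`; by
Banach–Alaoglu these weak-* closed conditions have a common solution, which norms `x`, hence is
`f`, yet is nonpositive at `y`. The balls `B(s • x, s‖x‖)` increase with `s`, so they form a
directed open cover of the compact set `A`, and a single scale covers it.
-/

open Metric Filter Set Topology

section

variable {X : Type*} [NormedAddCommGroup X] [NormedSpace ℝ X]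

lemma apply_le_norm_of_norm_le_one {g : StrongDual ℝ X} (hg : ‖g‖ ≤ 1) (x : X) : g x ≤ ‖x‖ :=
  (le_abs_self _).trans <| (g.le_of_opNorm_le hg x).trans_eq (one_mul _)

lemma apply_eq_norm_of_forall_apply_le {f : StrongDual ℝ X} {x : X} (hf : ‖f‖ ≤ 1)
    (hmax : ∀ g : StrongDual ℝ X, ‖g‖ ≤ 1 → g x ≤ f x) : f x = ‖x‖ := by
  obtain ⟨g, hg, hgx⟩ := exists_dual_vector'' ℝ x
  have hfx := apply_le_norm_of_norm_le_one hf x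
  have : ‖x‖ ≤ f x := by simpa [hgx] using hmax g hg
  linarith

lemma exists_norming_approx_nonpos {x y : X} {t : ℝ} (ht : 0 < t) (h : ‖x‖ ≤ ‖x - t • y‖) :
    ∃ g : StrongDual ℝ X, ‖g‖ ≤ 1 ∧ g y ≤ 0 ∧ ‖x‖ ≤ g x + t * ‖y‖ := by
  obtain ⟨g, hg, hgxy⟩ := exists_dual_vector'' ℝ (x - t • y)
  have hgxy' : g x - t * g y = ‖x - t • y‖ := by simpa using hgxy
  have hgx := apply_le_norm_of_norm_le_one hg x
  have hgy : -g y ≤ ‖y‖ := by simpa using apply_le_norm_of_norm_le_one hg (-y)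
  exact ⟨g, hg, nonpos_of_mul_nonpos_right (by linarith) ht, by nlinarith⟩

lemma exists_norming_nonpos_of_forall_norm_le {x y : X}
    (h : ∀ t : ℝ, 0 < t → ‖x‖ ≤ ‖x - t • y‖) :
    ∃ g : StrongDual ℝ X, ‖g‖ ≤ 1 ∧ g x = ‖x‖ ∧ g y ≤ 0 := by
  let K : Set (WeakDual ℝ X) := WeakDual.toStrongDual ⁻¹' closedBall 0 1
  let S : Ioi (0 : ℝ) → Set (WeakDual ℝ X) := fun t =>
    K ∩ ({g | g y ≤ 0} ∩ {g | ‖x‖ ≤ g x + t * ‖y‖})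
  have hK : IsCompact K := WeakDual.isCompact_closedBall 0 1
  have hS_closed : ∀ t, IsClosed (S t) := fun t =>
    (WeakDual.isClosed_closedBall 0 1).inter <|
      (isClosed_le (WeakDual.eval_continuous y) continuous_const).inter
        (isClosed_le continuous_const ((WeakDual.eval_continuous x).add continuous_const))
  have hS_mono : Monotone S := fun s t hst =>
    inter_subset_inter_right _ <| inter_subset_inter_right _ fun g (hg : ‖x‖ ≤ g x + s * ‖y‖) =>
      hg.trans <| by gcongr
  have hS_nonempty : ∀ t, (S t).Nonempty := fun t => by
    obtain ⟨g, hg⟩ := exists_norming_approx_nonpos t.2 (h t t.2)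
    exact ⟨StrongDual.toWeakDual g, by simpa [K, S] using hg⟩
  obtain ⟨g, hg⟩ := IsCompact.nonempty_iInter_of_directed_nonempty_isCompact_isClosed S
    hS_mono.directed_ge hS_nonempty (fun t => hK.of_isClosed_subset (hS_closed t)
      inter_subset_left) hS_closed
  simp only [mem_iInter, Subtype.forall, mem_Ioi] at hg
  have hg1 : ‖WeakDual.toStrongDual g‖ ≤ 1 := by simpa [K] using (hg 1 one_pos).1
  have hgx := apply_le_norm_of_norm_le_one hg1 x
  have hlim : Tendsto (fun t : ℝ => g x + t * ‖y‖) (𝓝[>] 0) (𝓝 (g x)) := by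
    have hcont : Continuous fun t : ℝ => g x + t * ‖y‖ := by fun_prop
    simpa using (hcont.tendsto 0).mono_left nhdsWithin_le_nhds
  have hxg : ‖x‖ ≤ g x :=
    ge_of_tendsto hlim (eventually_nhdsWithin_of_forall fun t ht => (hg t ht).2.2)
  exact ⟨WeakDual.toStrongDual g, hg1, le_antisymm hgx hxg, (hg 1 one_pos).2.1⟩

theorem exists_pos_norm_sub_smul_lt {x y : X} {f : StrongDual ℝ X}
    (hf : ∀ g : StrongDual ℝ X, ‖g‖ ≤ 1 → g x = ‖x‖ → g = f) (hy : 0 < f y) :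
    ∃ t : ℝ, 0 < t ∧ ‖x - t • y‖ < ‖x‖ := by
  by_contra! h
  obtain ⟨g, hg1, hgx, hgy⟩ := exists_norming_nonpos_of_forall_norm_le h
  rw [hf g hg1 hgx] at hgy
  exact hgy.not_gt hy

lemma mem_ball_smul_of_norm_sub_smul_lt {x y : X} {t : ℝ} (ht : 0 < t)
    (h : ‖x - t • y‖ < ‖x‖) : y ∈ ball (t⁻¹ • x) (t⁻¹ * ‖x‖) := by
  have hy : y - t⁻¹ • x = -(t⁻¹ • (x - t • y)) := by
    rw [smul_sub, smul_smul, inv_mul_cancel₀ ht.ne', one_smul, neg_sub]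
  rw [mem_ball, dist_eq_norm, hy, norm_neg, norm_smul, Real.norm_of_nonneg (inv_pos.2 ht).le]
  exact mul_lt_mul_of_pos_left h (inv_pos.2 ht)

lemma monotone_ball_smul (x : X) : Monotone fun s : ℝ => ball (s • x) (s * ‖x‖) := by
  intro a b hab y hy
  rw [mem_ball, dist_eq_norm] at hy ⊢
  calc ‖y - b • x‖ = ‖(y - a • x) + (a - b) • x‖ := by rw [sub_smul]; abel_nf
    _ ≤ ‖y - a • x‖ + (b - a) * ‖x‖ := by
      rw [← abs_of_nonneg (sub_nonneg.2 hab), abs_sub_comm, ← Real.norm_eq_abs, ← norm_smul]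
      exact norm_add_le _ _
    _ < b * ‖x‖ := by linarith

end

theorem stmt6_general {X : Type*} [NormedAddCommGroup X] [NormedSpace ℝ X]
    (A : Set X) (hA : IsCompact A) (m : ℕ)
    (f : Fin m → (X →L[ℝ] ℝ)) (hf : ∀ i, ‖f i‖ = 1)
    (hexp : ∀ i, ∃ xi : X, xi ≠ 0 ∧ (∀ g : X →L[ℝ] ℝ, ‖g‖ ≤ 1 → g xi ≤ f i xi) ∧
      (∀ g : X →L[ℝ] ℝ, ‖g‖ ≤ 1 → g xi = f i xi → g = f i))
    (hpos : ∀ y ∈ A, ∃ i, 0 < f i y) :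
    ∃ (x : Fin m → X) (l r : Fin m → ℝ),
      (∀ i, 0 < l i ∧ 0 < r i ∧ r i ≤ l i * ‖x i‖) ∧
      A ⊆ ⋃ i, ball ((l i) • (x i)) (r i) := by
  choose ξ hξ0 hξmax hξuniq using hexp
  have hnorming i : f i (ξ i) = ‖ξ i‖ := apply_eq_norm_of_forall_apply_le (hf i).le (hξmax i)
  let U : ℝ → Set X := fun s => ⋃ i, ball (s • ξ i) (s * ‖ξ i‖)
  have hcover : A ⊆ ⋃ s, U s := fun y hy => by
    obtain ⟨i, hi⟩ := hpos y hy
    obtain ⟨t, ht, hlt⟩ :=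
      exists_pos_norm_sub_smul_lt (fun g hg hgx => hξuniq i g hg (hgx.trans (hnorming i).symm)) hi
    exact mem_iUnion.2 ⟨t⁻¹, mem_iUnion.2 ⟨i, mem_ball_smul_of_norm_sub_smul_lt ht hlt⟩⟩
  have hU_mono : Monotone U := fun a b hab => iUnion_mono fun i => monotone_ball_smul (ξ i) hab
  obtain ⟨s, hs⟩ := hA.elim_directed_cover U (fun s => isOpen_iUnion fun i => isOpen_ball)
    hcover hU_mono.directed_le
  refine ⟨ξ, fun _ => max s 1, fun i => max s 1 * ‖ξ i‖, fun i => ⟨by positivity,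
    mul_pos (by positivity) (norm_pos_iff.2 (hξ0 i)), le_rfl⟩, hs.trans (hU_mono (le_max_left s 1))⟩

/-- A compact set A avoiding the origin admits a ball-covering by m
origin-avoiding balls, provided there are m weak*-exposed points f₁,…,f_m of the dual
unit ball with max fᵢ(y) > 0 for all y ∈ A. -/
theorem stmt6 {X : Type*} [NormedAddCommGroup X] [NormedSpace ℝ X] [CompleteSpace X]
    (A : Set X) (hA : IsCompact A) (h0 : (0 : X) ∉ A) (m : ℕ)
    (f : Fin m → (X →L[ℝ] ℝ)) (hf : ∀ i, ‖f i‖ = 1)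
    (hexp : ∀ i, ∃ xi : X, xi ≠ 0 ∧ (∀ g : X →L[ℝ] ℝ, ‖g‖ ≤ 1 → g xi ≤ f i xi) ∧
      (∀ g : X →L[ℝ] ℝ, ‖g‖ ≤ 1 → g xi = f i xi → g = f i))
    (hpos : ∀ y ∈ A, ∃ i, 0 < f i y) :
    ∃ (x : Fin m → X) (l r : Fin m → ℝ),
      (∀ i, 0 < l i ∧ 0 < r i ∧ r i ≤ l i * ‖x i‖) ∧
      A ⊆ ⋃ i, ball ((l i) • (x i)) (r i) :=
  stmt6_general A hA m f hf hexp hpos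
end

section
/- Let X be an n-dimensional real Banach space. Then the unit sphere S_X admits a symmetric ball-covering consisting of 2n open balls, i.e., there exist x₁,…,x_n ∈ X\{0} and radii 0 < rᵢ ≤ ‖xᵢ‖ with S_X ⊆ ⋃_{i=1}^n (B(xᵢ, rᵢ) ∪ B(−xᵢ, rᵢ)). -/
/-!
By Rademacher's theorem the norm is differentiable on a dense set. The derivatives `g` at these
smooth points separate the points of `X`: if `x` is smooth and close to `v ≠ 0`, then
`g v = ‖x‖ - g (x - v) ≥ ‖x‖ - ‖x - v‖ > 0`. Hence `n` of them, `gᵢ = ‖·‖'(pᵢ)`, already separate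
points, so `y ↦ (gᵢ y)ᵢ` is bounded below and every unit vector `y` has `|gᵢ y| ≥ c` for some `i`
and a fixed `c > 0`. Near `pᵢ` the norm decreases at a uniform rate in every direction `y` with
`gᵢ y ≥ c`, so for large `t` the ball `B(t pᵢ, t ‖pᵢ‖)` contains all such unit vectors `y`, and
`B(-t pᵢ, t ‖pᵢ‖)` those with `gᵢ y ≤ -c`.
-/

open Metric Module

theorem Module.Dual.exists_fin_finrank_separating {K V α : Type*} [Field K] [AddCommGroup V]
    [Module K V] [FiniteDimensional K V] (f : α → Dual K V) (hf : ∀ v ≠ 0, ∃ a, f a v ≠ 0) :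
    ∃ a : Fin (finrank K V) → α, ∀ v ≠ 0, ∃ i, f (a i) v ≠ 0 := by
  have hco : (Submodule.span K (Set.range f)).dualCoannihilator = ⊥ := by
    refine (Submodule.eq_bot_iff _).2 fun v hv => ?_
    by_contra hv0
    obtain ⟨a, ha⟩ := hf v hv0
    exact ha ((Submodule.mem_dualCoannihilator v).1 hv _ (Submodule.subset_span ⟨a, rfl⟩))
  have hspan : Submodule.span K (Set.range f) = ⊤ := by
    rw [← Subspace.dualCoannihilator_dualAnnihilator_eq (W := Submodule.span K (Set.range f)),
      hco, Submodule.dualAnnihilator_bot]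
  let b := Basis.ofSpan hspan.ge
  let e := b.indexEquiv (finBasisOfFinrankEq K (Dual K V) Subspace.dual_finrank_eq)
  choose a ha using fun i => Basis.ofSpan_subset hspan.ge ⟨e.symm i, rfl⟩
  refine ⟨a, fun v hv => ?_⟩
  by_contra! h
  have heval : Dual.eval K V v = 0 := b.ext fun j => by simpa [ha, b] using h (e j)
  exact hv ((forall_dual_apply_eq_zero_iff K v).1 fun φ => LinearMap.congr_fun heval φ)

theorem exists_pos_mul_norm_le_abs_apply {E ι : Type*} [NormedAddCommGroup E] [NormedSpace ℝ E]
    [FiniteDimensional ℝ E] [Fintype ι] (φ : ι → E →ₗ[ℝ] ℝ) (hφ : ∀ v ≠ 0, ∃ i, φ i v ≠ 0) :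
    ∃ c > 0, ∀ v ≠ 0, ∃ i, c * ‖v‖ ≤ |φ i v| := by
  have hinj : Function.Injective (LinearMap.pi φ) := by
    refine (injective_iff_map_eq_zero _).2 fun v hv => ?_
    by_contra hv0
    obtain ⟨i, hi⟩ := hφ v hv0
    exact hi (congrFun hv i)
  obtain ⟨K, hK, hanti⟩ := (LinearMap.pi φ).injective_iff_antilipschitz.1 hinj
  refine ⟨(K : ℝ)⁻¹, by positivity, fun v hv => ?_⟩
  by_contra! h
  have hlt : ‖LinearMap.pi φ v‖ < (K : ℝ)⁻¹ * ‖v‖ :=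
    (pi_norm_lt_iff (by positivity)).2 fun i => by simpa using h i
  have hK0 : (0 : ℝ) < K := hK
  refine lt_irrefl ‖v‖ ?_
  calc ‖v‖ ≤ K * ‖LinearMap.pi φ v‖ := hanti.le_mul_norm (map_zero _) v
    _ < K * ((K : ℝ)⁻¹ * ‖v‖) := mul_lt_mul_of_pos_left hlt hK0
    _ = ‖v‖ := by field_simp

theorem HasFDerivAt.exists_pos_forall_sub_smul_lt {E : Type*} [NormedAddCommGroup E]
    [NormedSpace ℝ E] {f : E → ℝ} {f' : E →L[ℝ] ℝ} {p : E} (hf : HasFDerivAt f f' p)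
    {δ : ℝ} (hδ : 0 < δ) : ∃ ε > (0 : ℝ), ∀ y : E, ‖y‖ ≤ 1 → δ ≤ f' y → f (p - ε • y) < f p := by
  obtain ⟨ρ, hρ, hball⟩ := Metric.eventually_nhds_iff.1
    ((hasFDerivAt_iff_isLittleO_nhds_zero.1 hf).def (half_pos hδ))
  refine ⟨ρ / 2, half_pos hρ, fun y hy hδy => ?_⟩
  have hsmall : ‖-((ρ / 2) • y)‖ ≤ ρ / 2 := by
    rw [norm_neg, norm_smul, Real.norm_of_nonneg (half_pos hρ).le]
    exact mul_le_of_le_one_right (half_pos hρ).le hy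
  have hρy := hball (show dist (-((ρ / 2) • y)) 0 < ρ by rw [dist_zero_right]; linarith)
  rw [← sub_eq_add_neg, map_neg, map_smul, smul_eq_mul, Real.norm_eq_abs] at hρy
  have herr := mul_le_mul_of_nonneg_left hsmall (half_pos hδ).le
  have hslope := mul_le_mul_of_nonneg_left hδy (half_pos hρ).le
  linarith [le_abs_self (f (p - (ρ / 2) • y) - f p - -(ρ / 2 * f' y)), mul_pos hρ hδ]

theorem HasFDerivAt.exists_pos_ball_union_cover_of_norm {E : Type*} [NormedAddCommGroup E]
    [NormedSpace ℝ E] {g : E →L[ℝ] ℝ} {p : E} (hp : HasFDerivAt (‖·‖) g p) {δ : ℝ} (hδ : 0 < δ) :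
    ∃ t > (0 : ℝ), ∀ y : E, ‖y‖ ≤ 1 → δ ≤ |g y| →
      y ∈ ball (t • p) (t * ‖p‖) ∪ ball (-(t • p)) (t * ‖p‖) := by
  obtain ⟨ε, hε, hdesc⟩ := hp.exists_pos_forall_sub_smul_lt hδ
  have hball : ∀ y : E, ‖y‖ ≤ 1 → δ ≤ g y → y ∈ ball (ε⁻¹ • p) (ε⁻¹ * ‖p‖) := by
    intro y hy hgy
    rw [mem_ball_iff_norm, ← norm_neg, show -(y - ε⁻¹ • p) = ε⁻¹ • (p - ε • y) by
      rw [smul_sub, smul_smul, inv_mul_cancel₀ hε.ne', one_smul, neg_sub], norm_smul,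
      Real.norm_of_nonneg (inv_pos.2 hε).le]
    exact mul_lt_mul_of_pos_left (hdesc y hy hgy) (inv_pos.2 hε)
  refine ⟨ε⁻¹, inv_pos.2 hε, fun y hy hgy => ?_⟩
  rcases le_abs'.1 hgy with hneg | hpos
  · right
    have := hball (-y) (by rwa [norm_neg]) (by rw [map_neg]; linarith)
    rwa [mem_ball, ← dist_neg_neg, neg_neg] at this
  · exact Or.inl (hball y hy hpos)

theorem exists_differentiableAt_norm_fderiv_apply_pos {E : Type*} [NormedAddCommGroup E]
    [NormedSpace ℝ E] [FiniteDimensional ℝ E] {v : E} (hv : v ≠ 0) :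
    ∃ x : E, DifferentiableAt ℝ (‖·‖) x ∧ 0 < fderiv ℝ (‖·‖) x v := by
  obtain ⟨x, hdiff, hxv⟩ := (dense_differentiableAt_norm (E := E)).exists_mem_open
    (isOpen_ball (x := v)) (nonempty_ball.2 (half_pos (norm_pos_iff.2 hv)))
  refine ⟨x, hdiff, ?_⟩
  rw [mem_ball, dist_eq_norm] at hxv
  have hg : ‖fderiv ℝ (‖·‖) x‖ ≤ 1 := by
    simpa using norm_fderiv_le_of_lipschitz ℝ lipschitzWith_one_norm (x₀ := x)
  have hsub := le_of_abs_le ((fderiv ℝ (‖·‖) x).le_of_opNorm_le hg (x - v))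
  have hv' := norm_sub_norm_le v x
  rw [map_sub, hdiff.fderiv_norm_self, one_mul] at hsub
  rw [norm_sub_rev] at hv'
  linarith

/-- The unit sphere of an n-dimensional real Banach space admits a
symmetric ball-covering by 2n origin-avoiding open balls. -/
theorem stmt7 {X : Type*} [NormedAddCommGroup X] [NormedSpace ℝ X]
    [FiniteDimensional ℝ X] (n : ℕ) (hdim : Module.finrank ℝ X = n) :
    ∃ (x : Fin n → X) (r : Fin n → ℝ),
      (∀ i, x i ≠ 0 ∧ 0 < r i ∧ r i ≤ ‖x i‖) ∧
      sphere (0 : X) 1 ⊆ ⋃ i, (ball (x i) (r i) ∪ ball (-(x i)) (r i)) := by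
  subst hdim
  obtain ⟨p, hsep⟩ := Dual.exists_fin_finrank_separating
    (fun x : {x : X // DifferentiableAt ℝ (‖·‖) x} => (fderiv ℝ (‖·‖) (x : X) : X →ₗ[ℝ] ℝ))
    fun v hv => by
      obtain ⟨x, hx, hpos⟩ := exists_differentiableAt_norm_fderiv_apply_pos hv
      exact ⟨⟨x, hx⟩, hpos.ne'⟩
  obtain ⟨c, hc, hbound⟩ := exists_pos_mul_norm_le_abs_apply _ hsep
  choose t ht hcover using fun i => (p i).2.hasFDerivAt.exists_pos_ball_union_cover_of_norm hc
  refine ⟨fun i => t i • (p i : X), fun i => t i * ‖(p i : X)‖, fun i => ?_, fun y hy => ?_⟩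
  · have : Nontrivial X := Module.nontrivial_of_finrank_pos i.pos
    have hp0 : (p i : X) ≠ 0 := fun h => not_differentiableAt_norm_zero X (h ▸ (p i).2)
    refine ⟨smul_ne_zero (ht i).ne' hp0, mul_pos (ht i) (norm_pos_iff.2 hp0), ?_⟩
    rw [norm_smul, Real.norm_of_nonneg (ht i).le]
  · rw [mem_sphere_zero_iff_norm] at hy
    obtain ⟨i, hi⟩ := hbound y (norm_ne_zero_iff.1 (by rw [hy]; exact one_ne_zero))
    rw [hy, mul_one] at hi
    exact Set.mem_iUnion.2 ⟨i, hcover i y hy.le hi⟩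
end

section
/- Let X be an n-dimensional real Banach space. Every symmetric ball-covering of S_X not containing the origin in any of its balls consists of at least 2n balls: if S_X ⊆ ⋃_{i=1}^r (B(xᵢ, rᵢ) ∪ B(−xᵢ, rᵢ)) with 0 < rᵢ ≤ ‖xᵢ‖ for all i, then r ≥ n. -/
/-!
Fix norming functionals `fᵢ` of the centres `xᵢ` (Hahn–Banach: `‖fᵢ‖ ≤ 1`, `fᵢ xᵢ = ‖xᵢ‖`).
A point `z` of `ker fᵢ` satisfies `‖xᵢ‖ = |fᵢ (z ∓ xᵢ)| ≤ ‖z ∓ xᵢ‖`, so it lies in neither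
`B(xᵢ, rᵢ)` nor `B(-xᵢ, rᵢ)` once `rᵢ ≤ ‖xᵢ‖`. If there were fewer than `n` pairs, the kernels
of the `fᵢ` would share a unit vector, and that vector would escape the covering.
-/

open Metric Filter Set Topology

section NormingFunctional

variable {X : Type*} [NormedAddCommGroup X] [NormedSpace ℝ X]
  {f : StrongDual ℝ X} {x z : X}

theorem norm_le_dist_of_apply_eq_zero (hf : ‖f‖ ≤ 1) (hfx : f x = ‖x‖) (hz : f z = 0) :
    ‖x‖ ≤ dist z x := calc
  ‖x‖ = f (x - z) := by rw [map_sub, hz, hfx, sub_zero]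
  _ ≤ ‖f‖ * ‖x - z‖ := (le_abs_self _).trans (f.le_opNorm _)
  _ ≤ dist z x := by
    rw [dist_comm, dist_eq_norm]
    exact mul_le_of_le_one_left (norm_nonneg _) hf

theorem norm_le_dist_neg_of_apply_eq_zero (hf : ‖f‖ ≤ 1) (hfx : f x = ‖x‖) (hz : f z = 0) :
    ‖x‖ ≤ dist z (-x) := by
  have hf' : ‖-f‖ ≤ 1 := by rwa [norm_neg]
  have hfx' : (-f) (-x) = ‖-x‖ := by simp [hfx]
  simpa using norm_le_dist_of_apply_eq_zero hf' hfx' (by simp [hz])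

theorem notMem_ball_union_ball_neg_of_apply_eq_zero (hf : ‖f‖ ≤ 1) (hfx : f x = ‖x‖)
    (hz : f z = 0) {r : ℝ} (hr : r ≤ ‖x‖) : z ∉ ball x r ∪ ball (-x) r := by
  rintro (hzx | hzx) <;> rw [mem_ball] at hzx
  · linarith [norm_le_dist_of_apply_eq_zero hf hfx hz]
  · linarith [norm_le_dist_neg_of_apply_eq_zero hf hfx hz]

end NormingFunctional

theorem exists_ne_zero_forall_apply_eq_zero {K V ι : Type*} [Field K] [AddCommGroup V]
    [Module K V] [FiniteDimensional K V] [Fintype ι] (f : ι → V →ₗ[K] K)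
    (hcard : Fintype.card ι < Module.finrank K V) : ∃ v ≠ 0, ∀ i, f i v = 0 := by
  have hker : LinearMap.ker (LinearMap.pi f) ≠ ⊥ :=
    LinearMap.ker_ne_bot_of_finrank_lt (by rwa [Module.finrank_fintype_fun_eq_card])
  obtain ⟨v, hv, hv0⟩ := (Submodule.ne_bot_iff _).mp hker
  exact ⟨v, hv0, fun i => congr_fun (LinearMap.mem_ker.mp hv) i⟩

theorem exists_mem_sphere_forall_apply_eq_zero {X ι : Type*} [NormedAddCommGroup X]
    [NormedSpace ℝ X] [FiniteDimensional ℝ X] [Fintype ι] (f : ι → StrongDual ℝ X)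
    (hcard : Fintype.card ι < Module.finrank ℝ X) :
    ∃ u ∈ sphere (0 : X) 1, ∀ i, f i u = 0 := by
  obtain ⟨v, hv0, hv⟩ := exists_ne_zero_forall_apply_eq_zero (fun i => (f i).toLinearMap) hcard
  refine ⟨‖v‖⁻¹ • v, ?_, fun i => ?_⟩
  · rw [mem_sphere_zero_iff_norm, norm_smul, norm_inv, norm_norm,
      inv_mul_cancel₀ (norm_ne_zero_iff.mpr hv0)]
  · rw [map_smul, ← ContinuousLinearMap.coe_coe, hv i, smul_zero]

/-- Every symmetric covering of the unit sphere of an n-dimensional real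
Banach space by origin-avoiding open balls consists of at least 2n balls, i.e. uses at
least n symmetric pairs. -/
theorem stmt8 {X : Type*} [NormedAddCommGroup X] [NormedSpace ℝ X]
    [FiniteDimensional ℝ X] (n : ℕ) (hdim : Module.finrank ℝ X = n)
    (k : ℕ) (x : Fin k → X) (r : Fin k → ℝ)
    (hr : ∀ i, 0 < r i ∧ r i ≤ ‖x i‖)
    (hcov : sphere (0 : X) 1 ⊆ ⋃ i, (ball (x i) (r i) ∪ ball (-(x i)) (r i))) :
    n ≤ k := by
  by_contra! hk
  choose f hf hfx using fun i => exists_dual_vector'' ℝ (x i)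
  obtain ⟨u, hu, hfu⟩ :=
    exists_mem_sphere_forall_apply_eq_zero f (by rwa [Fintype.card_fin, hdim])
  obtain ⟨i, hi⟩ := mem_iUnion.mp (hcov hu)
  exact notMem_ball_union_ball_neg_of_apply_eq_zero (hf i) (hfx i) (hfu i) (hr i).2 hi
end

section
/- Let X be a real Banach space, A ⊆ X a compact set not containing 0, I a finite index set with m elements, and {xᵢ : i ∈ I} ⊆ S_X. Then there exist yᵢ ∈ ℝ⁺xᵢ and radii 0 < rᵢ ≤ ‖yᵢ‖ with A ⊆ ⋃_{i∈I} B(yᵢ, rᵢ) if and only if for every selection φ with φ(xᵢ) ∈ J(xᵢ) for all i, we have sup_{i∈I} φ(xᵢ)(x) > 0 for every x ∈ A. -/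
open Metric Filter Set Topology

lemma keyB {X : Type*} [NormedAddCommGroup X] [NormedSpace ℝ X] (u a : X) (hu : ‖u‖ = 1)
    (h : ∀ l : ℝ, 0 < l → l ≤ ‖l • u - a‖) :
    ∃ f : X →L[ℝ] ℝ, ‖f‖ = 1 ∧ f u = 1 ∧ f a ≤ 0 := by
  set S : X → Set ℝ := fun v => (fun t : ℝ => ‖v - t • a‖) '' Ici 0 with hS
  have hne : ∀ v, (S v).Nonempty := fun v => ⟨‖v - (0:ℝ) • a‖, 0, self_mem_Ici, rfl⟩
  have hbdd : ∀ v, BddBelow (S v) := fun v => ⟨0, by rintro r ⟨t, ht, rfl⟩; positivity⟩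
  set N : X → ℝ := fun v => sInf (S v) with hN
  have N_le : ∀ v, ∀ t : ℝ, 0 ≤ t → N v ≤ ‖v - t • a‖ := fun v t ht =>
    csInf_le (hbdd v) ⟨t, mem_Ici.2 ht, rfl⟩
  have N_nonneg : ∀ v, 0 ≤ N v := fun v => le_csInf (hne v) (by rintro r ⟨t, ht, rfl⟩; positivity)
  have N_hom : ∀ c : ℝ, 0 < c → ∀ v, N (c • v) = c * N v := by
    have key : ∀ c : ℝ, 0 < c → ∀ v, N (c • v) ≤ c * N v := by
      intro c hc v
      have h1 : ∀ r ∈ S v, N (c • v) / c ≤ r := by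
        rintro r ⟨t, ht, rfl⟩
        rw [mem_Ici] at ht
        rw [div_le_iff₀ hc]
        have := N_le (c • v) (c * t) (by positivity)
        calc N (c • v) ≤ ‖c • v - (c * t) • a‖ := this
          _ = ‖c • (v - t • a)‖ := by rw [smul_sub, mul_smul]
          _ = ‖v - t • a‖ * c := by
              rw [norm_smul, Real.norm_eq_abs, abs_of_pos hc]; ring
      have := le_csInf (hne v) h1
      linarith [(div_le_iff₀ hc).1 this]
    intro c hc v
    refine le_antisymm (key c hc v) ?_
    have := key c⁻¹ (by positivity) (c • v)
    rw [inv_smul_smul₀ hc.ne'] at this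
    have h2 : c * N v ≤ c * (c⁻¹ * N (c • v)) := by
      exact mul_le_mul_of_nonneg_left this hc.le
    rw [← mul_assoc, mul_inv_cancel₀ hc.ne', one_mul] at h2
    exact h2
  have N_add : ∀ v w, N (v + w) ≤ N v + N w := by
    intro v w
    have h1 : ∀ r₁ ∈ S v, ∀ r₂ ∈ S w, N (v + w) ≤ r₁ + r₂ := by
      rintro r₁ ⟨t₁, ht₁, rfl⟩ r₂ ⟨t₂, ht₂, rfl⟩
      rw [mem_Ici] at ht₁ ht₂
      calc N (v + w) ≤ ‖(v + w) - (t₁ + t₂) • a‖ := N_le _ _ (by positivity)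
        _ = ‖(v - t₁ • a) + (w - t₂ • a)‖ := by rw [add_smul]; congr 1; abel
        _ ≤ ‖v - t₁ • a‖ + ‖w - t₂ • a‖ := norm_add_le _ _
    have h2 : ∀ r₁ ∈ S v, N (v + w) - N w ≤ r₁ := by
      intro r₁ hr₁
      have : N (v + w) - r₁ ≤ N w :=
        le_csInf (hne w) (fun r₂ hr₂ => by linarith [h1 r₁ hr₁ r₂ hr₂])
      linarith
    linarith [le_csInf (hne v) h2]
  have huz : u ≠ 0 := by intro h'; rw [h', norm_zero] at hu; norm_num at hu
  set f₀ : X →ₗ.[ℝ] ℝ := LinearPMap.mkSpanSingleton u 1 huz with hf₀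
  have hdom : f₀.domain = Submodule.span ℝ {u} := rfl
  have hNspan : ∀ s : ℝ, s ≤ N (s • u) := by
    intro s
    rcases le_or_gt s 0 with hs | hs
    · exact hs.trans (N_nonneg _)
    · refine le_csInf (hne _) ?_
      rintro r ⟨t, ht, rfl⟩
      rw [mem_Ici] at ht
      rcases eq_or_lt_of_le ht with ht0 | ht0
      · show s ≤ ‖s • u - t • a‖
        rw [← ht0, zero_smul, sub_zero, norm_smul, Real.norm_eq_abs, abs_of_pos hs, hu, mul_one]
      · show s ≤ ‖s • u - t • a‖
        have hst : 0 < s / t := by positivity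
        have := h (s / t) hst
        have h3 : t * (s / t) ≤ t * ‖(s / t) • u - a‖ := mul_le_mul_of_nonneg_left this ht
        rw [mul_div_cancel₀ _ ht0.ne'] at h3
        calc s ≤ t * ‖(s / t) • u - a‖ := h3
          _ = ‖t • ((s / t) • u - a)‖ := by
              rw [norm_smul, Real.norm_eq_abs, abs_of_pos ht0]
          _ = ‖s • u - t • a‖ := by
              rw [smul_sub, smul_smul, mul_div_cancel₀ _ ht0.ne']
  have hf : ∀ z : f₀.domain, f₀ z ≤ N z := by
    rintro ⟨z, hz⟩
    rw [hdom, Submodule.mem_span_singleton] at hz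
    obtain ⟨s, rfl⟩ := hz
    have : f₀ ⟨s • u, by rw [hdom]; exact Submodule.smul_mem _ s (Submodule.mem_span_singleton_self u)⟩ = s • (1:ℝ) :=
      LinearPMap.mkSpanSingleton'_apply _ _ _ s _
    rw [this, smul_eq_mul, mul_one]
    exact hNspan s
  obtain ⟨g, hg1, hg2⟩ := exists_extension_of_le_sublinear f₀ N N_hom N_add hf
  have hgu : g u = 1 := by
    have hm : u ∈ f₀.domain := by rw [hdom]; exact Submodule.mem_span_singleton_self u
    have := hg1 ⟨u, hm⟩
    rwa [LinearPMap.mkSpanSingleton_apply] at this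
  have hga : g a ≤ 0 := by
    have := hg2 a
    have h4 : N a ≤ ‖a - (1:ℝ) • a‖ := N_le a 1 zero_le_one
    rw [one_smul, sub_self, norm_zero] at h4
    linarith
  have hbound : ∀ v, ‖g v‖ ≤ 1 * ‖v‖ := by
    intro v
    rw [one_mul, Real.norm_eq_abs, abs_le]
    constructor
    · have := (hg2 (-v)).trans ((N_le (-v) 0 le_rfl).trans_eq (by rw [zero_smul, sub_zero, norm_neg]))
      rw [map_neg] at this; linarith
    · exact (hg2 v).trans ((N_le v 0 le_rfl).trans_eq (by rw [zero_smul, sub_zero]))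
  refine ⟨g.mkContinuous 1 hbound, ?_, hgu, hga⟩
  refine le_antisymm (g.mkContinuous_norm_le zero_le_one hbound) ?_
  have := (g.mkContinuous 1 hbound).le_opNorm u
  rw [hu, mul_one] at this
  calc (1:ℝ) = g u := hgu.symm
    _ ≤ ‖(g.mkContinuous 1 hbound) u‖ := le_abs_self _
    _ ≤ ‖g.mkContinuous 1 hbound‖ := this

/-- For a compact A avoiding 0 and unit vectors x₁,…,x_m, A has a
ball-covering by origin-avoiding balls centered on the positive rays of the xᵢ iff every
selection of the subdifferential mapping positively separates the points of A. -/
theorem stmt11 {X : Type*} [NormedAddCommGroup X] [NormedSpace ℝ X] [CompleteSpace X]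
    (A : Set X) (hA : IsCompact A) (h0 : (0 : X) ∉ A)
    (m : ℕ) (x : Fin m → X) (hx : ∀ i, ‖x i‖ = 1) :
    (∃ (y : Fin m → X) (r : Fin m → ℝ),
        (∀ i, (∃ l : ℝ, 0 < l ∧ y i = l • x i) ∧ 0 < r i ∧ r i ≤ ‖y i‖) ∧
        A ⊆ ⋃ i, ball (y i) (r i)) ↔
      (∀ φ : Fin m → (X →L[ℝ] ℝ),
        (∀ i, ‖φ i‖ = 1 ∧ φ i (x i) = ‖x i‖) → ∀ a ∈ A, ∃ i, 0 < φ i a) := by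
  constructor
  · rintro ⟨y, r, hyr, hcov⟩ φ hφ a ha
    obtain ⟨i, hi⟩ := mem_iUnion.1 (hcov ha)
    obtain ⟨⟨l, hl, hyl⟩, hr, hrl⟩ := hyr i
    refine ⟨i, ?_⟩
    have hnorm : ‖y i‖ = l := by rw [hyl, norm_smul, Real.norm_eq_abs, abs_of_pos hl, hx i, mul_one]
    have hφy : φ i (y i) = l := by rw [hyl, map_smul, smul_eq_mul, (hφ i).2, hx i, mul_one]
    have hdist : ‖y i - a‖ < r i := by
      rw [mem_ball, dist_eq_norm] at hi; rwa [norm_sub_rev]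
    have hb : φ i (y i - a) ≤ ‖y i - a‖ := by
      calc φ i (y i - a) ≤ ‖φ i (y i - a)‖ := le_abs_self _
        _ ≤ ‖φ i‖ * ‖y i - a‖ := (φ i).le_opNorm _
        _ = ‖y i - a‖ := by rw [(hφ i).1, one_mul]
    have : φ i a = l - φ i (y i - a) := by rw [map_sub, hφy]; ring
    rw [this]
    have : ‖y i - a‖ < l := lt_of_lt_of_le hdist (hrl.trans_eq hnorm)
    linarith
  · intro h
    have hpt : ∀ a ∈ A, ∃ i, ∃ l : ℝ, 0 < l ∧ ‖a - l • x i‖ < l := by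
      intro a ha
      by_contra hc
      push_neg at hc
      have hci : ∀ i, ∀ l : ℝ, 0 < l → l ≤ ‖l • x i - a‖ := by
        intro i l hl
        rw [norm_sub_rev]
        exact hc i l hl
      choose φ hφn hφx hφa using fun i => keyB (x i) a (hx i) (hci i)
      obtain ⟨i, hi⟩ := h φ (fun i => ⟨hφn i, by rw [hφx i, hx i]⟩) a ha
      exact absurd hi (not_lt.2 (hφa i))
    set U : (Fin m × {l : ℝ // 0 < l}) → Set X := fun p => ball (p.2.1 • x p.1) p.2.1 with hU
    obtain ⟨t, ht⟩ := hA.elim_finite_subcover U (fun p => isOpen_ball) (by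
      intro a ha
      obtain ⟨i, l, hl, hil⟩ := hpt a ha
      exact mem_iUnion.2 ⟨⟨i, ⟨l, hl⟩⟩, by rwa [hU, mem_ball, dist_eq_norm]⟩)
    set c : Fin m → ℝ := fun i => 1 + ∑ p ∈ t.filter (fun p => p.1 = i), p.2.1 with hc
    have hcpos : ∀ i, 0 < c i := by
      intro i
      have : (0:ℝ) ≤ ∑ p ∈ t.filter (fun p => p.1 = i), p.2.1 :=
        Finset.sum_nonneg (fun p _ => p.2.2.le)
      simp only [hc]; linarith
    have hcle : ∀ p ∈ t, p.2.1 ≤ c p.1 := by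
      intro p hp
      have hmem : p ∈ t.filter (fun q => q.1 = p.1) := Finset.mem_filter.2 ⟨hp, rfl⟩
      have := Finset.single_le_sum (f := fun q : Fin m × {l : ℝ // 0 < l} => q.2.1)
        (fun q _ => q.2.2.le) hmem
      simp only [hc]; linarith
    refine ⟨fun i => c i • x i, c, fun i => ⟨⟨c i, hcpos i, rfl⟩, hcpos i, ?_⟩, ?_⟩
    · rw [norm_smul, Real.norm_eq_abs, abs_of_pos (hcpos i), hx i, mul_one]
    · intro a ha
      obtain ⟨p, hpt', hpa⟩ := mem_iUnion₂.1 (ht ha)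
      refine mem_iUnion.2 ⟨p.1, ?_⟩
      rw [mem_ball, dist_eq_norm] at hpa ⊢
      have hle := hcle p hpt'
      calc ‖a - c p.1 • x p.1‖
          ≤ ‖a - p.2.1 • x p.1‖ + ‖(p.2.1 - c p.1) • x p.1‖ := by
            rw [← sub_add_sub_cancel a (p.2.1 • x p.1) (c p.1 • x p.1)]
            exact (norm_add_le _ _).trans_eq (by rw [← sub_smul])
        _ = ‖a - p.2.1 • x p.1‖ + (c p.1 - p.2.1) := by
            rw [norm_smul, Real.norm_eq_abs, hx, mul_one, abs_sub_comm, abs_of_nonneg (by linarith)]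
        _ < p.2.1 + (c p.1 - p.2.1) := by linarith
        _ = c p.1 := by ring
end

section
/- Let X be a finite-dimensional real Banach space, A ⊆ X bounded with d(0,A) > 0, I a finite index set, and {xᵢ : i ∈ I} ⊆ S_X such that the closure of A is disjoint from ⋃_{i∈I} xᵢ^⊥. If there exist yᵢ ∈ ℝ⁺xᵢ and 0 < rᵢ ≤ ‖yᵢ‖ with A ⊆ ⋃_{i∈I} B(yᵢ, rᵢ), then for every selection φ of the subdifferential mapping, sup_{i∈I} φ(xᵢ)(x) > 0 for all x in the closure of A. -/
open Metric Filter Set Topology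

/-- In a finite-dimensional space, if A is bounded with d(0,A) > 0 and
the closure of A avoids every xᵢ^⊥ (Birkhoff–James orthogonality), then any covering of
A by origin-avoiding balls centered on the positive rays of the xᵢ forces every
selection of the subdifferential mapping to positively separate the closure of A. -/
theorem stmt12 {X : Type*} [NormedAddCommGroup X] [NormedSpace ℝ X]
    [FiniteDimensional ℝ X]
    (A : Set X) (hAb : Bornology.IsBounded A)
    (hd : ∃ δ : ℝ, 0 < δ ∧ ∀ a ∈ A, δ ≤ ‖a‖)
    (m : ℕ) (x : Fin m → X) (hx : ∀ i, ‖x i‖ = 1)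
    (hdisj : ∀ z ∈ closure A, ∀ i, ¬ (∀ t : ℝ, ‖x i‖ ≤ ‖x i + t • z‖))
    (y : Fin m → X) (r : Fin m → ℝ)
    (hyr : ∀ i, (∃ l : ℝ, 0 < l ∧ y i = l • x i) ∧ 0 < r i ∧ r i ≤ ‖y i‖)
    (hcov : A ⊆ ⋃ i, ball (y i) (r i)) :
    ∀ φ : Fin m → (X →L[ℝ] ℝ),
      (∀ i, ‖φ i‖ = 1 ∧ φ i (x i) = ‖x i‖) → ∀ z ∈ closure A, ∃ i, 0 < φ i z := by
  intro φ hφ z hz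
  -- closure A is contained in the union of the closed balls
  have hclos : closure A ⊆ ⋃ i, closedBall (y i) (r i) := by
    have h1 : closure A ⊆ closure (⋃ i, ball (y i) (r i)) := closure_mono hcov
    have h2 : closure (⋃ i, ball (y i) (r i)) ⊆ ⋃ i, closedBall (y i) (r i) := by
      rw [closure_iUnion_of_finite]
      exact Set.iUnion_mono fun i => closure_ball_subset_closedBall
    exact h1.trans h2
  obtain ⟨_, ⟨i, rfl⟩, hzi⟩ := hclos hz
  refine ⟨i, ?_⟩
  obtain ⟨⟨l, hl, hy⟩, hr0, hrl⟩ := hyr i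
  have hφy : φ i (y i) = ‖y i‖ := by
    rw [hy, map_smul, (hφ i).2, hx i, norm_smul, Real.norm_of_nonneg hl.le, hx i]
    simp
  have hnonneg : 0 ≤ φ i z := by
    have h1 : φ i (y i) - φ i (y i - z) = φ i z := by
      rw [map_sub]; ring
    have h2 : φ i (y i - z) ≤ ‖y i - z‖ :=
      (le_abs_self _).trans (((φ i).le_opNorm _).trans_eq (by rw [(hφ i).1, one_mul]))
    have h3 : ‖y i - z‖ ≤ r i := by
      rw [← dist_eq_norm, dist_comm]; exact mem_closedBall.mp hzi
    nlinarith
  rcases hnonneg.lt_or_eq with h | h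
  · exact h
  · exfalso
    apply hdisj z hz i
    intro t
    have : ‖x i‖ = φ i (x i + t • z) := by
      rw [map_add, map_smul, (hφ i).2, ← h]; simp
    calc ‖x i‖ = φ i (x i + t • z) := this
      _ ≤ ‖x i + t • z‖ := (le_abs_self _).trans
          (((φ i).le_opNorm _).trans_eq (by rw [(hφ i).1, one_mul]))
end

section
/- Let X be a finite-dimensional real Banach space, A ⊆ X bounded with d(0,A) > 0, I a finite index set, and {xᵢ : i ∈ I} ⊆ S_X. If for every selection φ of the subdifferential mapping (φ(xᵢ) ∈ J(xᵢ) for each i) one has sup_{i∈I} φ(xᵢ)(x) > 0 for every x in the closure of A, then there exist yᵢ ∈ ℝ⁺xᵢ and radii 0 < rᵢ ≤ ‖yᵢ‖ such that A ⊆ ⋃_{i∈I} B(yᵢ, rᵢ). -/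
open Metric Set

/-!
For a unit vector `x`, the balls `B(c • x, c)`, `c > 0`, increase with `c`, so their union is an
open convex cone. A point `a` outside it is separated from it by a functional `f`; letting
`c → 0` and `c → ∞` in `f a < f (c • x - c • v)`, `‖v‖ < 1`, gives `f a ≤ 0` and shows that `f`
attains its norm at `x`, so that `f / ‖f‖ ∈ J(x)`. The separation hypothesis therefore puts
every point of the compact set `closure A` in one of these cones, and, the cover by the open
sets `⋃ i, B(c • xᵢ, c)` being directed, a single `c` already works.
-/

lemma nonpos_and_nonneg_of_forall_lt_mul {p q : ℝ} (h : ∀ c : ℝ, 0 < c → q < c * p) :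
    q ≤ 0 ∧ 0 ≤ p := by
  constructor
  · by_contra! hq
    rcases le_or_gt p 0 with hp | hp
    · linarith [h 1 one_pos]
    · have := h (q / (2 * p)) (by positivity)
      rw [div_mul_eq_mul_div, mul_div_mul_right _ _ hp.ne'] at this
      linarith
  · by_contra! hp
    have := h ((|q| + 1) / -p) (div_pos (by positivity) (neg_pos.2 hp))
    rw [div_mul_eq_mul_div, div_neg, mul_div_cancel_right₀ _ hp.ne] at this
    linarith [neg_abs_le q]

lemma ball_smul_subset_ball_smul {E : Type*} [SeminormedAddCommGroup E] [NormedSpace ℝ E]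
    {x : E} (hx : ‖x‖ ≤ 1) {c c' : ℝ} (hc : c ≤ c') : ball (c • x) c ⊆ ball (c' • x) c' := by
  refine ball_subset_ball' ?_
  rw [dist_eq_norm, ← sub_smul, norm_smul, Real.norm_of_nonpos (by linarith)]
  nlinarith [norm_nonneg x]

lemma norm_eq_apply_of_forall_mem_ball_le {E : Type*} [NormedAddCommGroup E] [NormedSpace ℝ E]
    (f : StrongDual ℝ E) {x : E} (hx : ‖x‖ ≤ 1) (h : ∀ v ∈ ball (0 : E) 1, f v ≤ f x) :
    ‖f‖ = f x := by
  have hclosed : ∀ v ∈ closedBall (0 : E) 1, f v ≤ f x := by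
    rw [← closure_ball (0 : E) one_ne_zero]
    exact (isClosed_le f.continuous continuous_const).closure_subset_iff.2 h
  refine le_antisymm (f.opNorm_le_of_unit_norm ?_ fun v hv => ?_) ?_
  · simpa using hclosed 0 (mem_closedBall_self zero_le_one)
  · have hneg := hclosed (-v) (by simp [hv])
    rw [map_neg] at hneg
    rw [Real.norm_eq_abs, abs_le]
    exact ⟨by linarith, hclosed v (by simp [hv])⟩
  · calc f x ≤ ‖f x‖ := le_abs_self _
      _ ≤ ‖f‖ * ‖x‖ := f.le_opNorm x
      _ ≤ ‖f‖ := mul_le_of_le_one_right (norm_nonneg f) hx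

lemma exists_dual_apply_eq_one_nonpos_of_notMem_ball_smul {E : Type*} [NormedAddCommGroup E]
    [NormedSpace ℝ E] {x a : E} (hx : ‖x‖ = 1) (ha : ∀ c : ℝ, a ∉ ball (c • x) c) :
    ∃ f : StrongDual ℝ E, ‖f‖ = 1 ∧ f x = 1 ∧ f a ≤ 0 := by
  have hmono : Monotone fun c : ℝ => ball (c • x) c := fun _ _ =>
    ball_smul_subset_ball_smul hx.le
  obtain ⟨g, hg⟩ := geometric_hahn_banach_open_point
    (hmono.directed_le.convex_iUnion fun c => convex_ball _ _)
    (isOpen_iUnion fun c => isOpen_ball) (by simpa only [mem_iUnion, not_exists] using ha)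
  set f := -g
  have hlt : ∀ v ∈ ball (0 : E) 1, ∀ c : ℝ, 0 < c → f a < c * (f x - f v) := by
    intro v hv c hc
    have hmem : c • x - c • v ∈ ball (c • x) c := by
      rw [mem_ball_zero_iff] at hv
      rw [mem_ball, dist_eq_norm, sub_sub_cancel_left, norm_neg, norm_smul,
        Real.norm_of_nonneg hc.le]
      exact mul_lt_of_lt_one_right hc hv
    have := hg _ (mem_iUnion.2 ⟨c, hmem⟩)
    simp only [f, neg_apply, map_sub, map_smul, smul_eq_mul] at this ⊢
    linarith
  have hfa : f a ≤ 0 := by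
    simpa using (nonpos_and_nonneg_of_forall_lt_mul (hlt 0 (mem_ball_self one_pos))).1
  have hnorm : ‖f‖ = f x := norm_eq_apply_of_forall_mem_ball_le f hx.le fun v hv =>
    sub_nonneg.1 (nonpos_and_nonneg_of_forall_lt_mul (hlt v hv)).2
  have hf : ‖f‖ ≠ 0 := by
    intro h0
    rw [norm_eq_zero] at h0
    simpa [h0] using hlt 0 (mem_ball_self one_pos) 1 one_pos
  refine ⟨‖f‖⁻¹ • f, ?_, ?_, ?_⟩
  · rw [norm_smul, norm_inv, norm_norm, inv_mul_cancel₀ hf]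
  · rw [smul_apply, smul_eq_mul, ← hnorm, inv_mul_cancel₀ hf]
  · exact mul_nonpos_of_nonneg_of_nonpos (inv_nonneg.2 (norm_nonneg f)) hfa

theorem stmt13_general {X : Type*} [NormedAddCommGroup X] [NormedSpace ℝ X]
    [FiniteDimensional ℝ X]
    (A : Set X) (hAb : Bornology.IsBounded A)
    (m : ℕ) (x : Fin m → X) (hx : ∀ i, ‖x i‖ = 1)
    (hsep : ∀ φ : Fin m → (X →L[ℝ] ℝ),
      (∀ i, ‖φ i‖ = 1 ∧ φ i (x i) = ‖x i‖) → ∀ z ∈ closure A, ∃ i, 0 < φ i z) :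
    ∃ (y : Fin m → X) (r : Fin m → ℝ),
      (∀ i, (∃ l : ℝ, 0 < l ∧ y i = l • x i) ∧ 0 < r i ∧ r i ≤ ‖y i‖) ∧
      A ⊆ ⋃ i, ball (y i) (r i) := by
  have hcover : closure A ⊆ ⋃ c : ℝ, ⋃ i, ball (c • x i) c := by
    intro z hz
    by_contra hz'
    simp only [mem_iUnion, not_exists] at hz'
    choose φ hφ using fun i =>
      exists_dual_apply_eq_one_nonpos_of_notMem_ball_smul (hx i) fun c => hz' c i
    obtain ⟨i, hi⟩ := hsep φ (fun i => ⟨(hφ i).1, by rw [hx i, (hφ i).2.1]⟩) z hz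
    exact (hφ i).2.2.not_gt hi
  have hmono : Monotone fun c : ℝ => ⋃ i, ball (c • x i) c := fun _ _ h =>
    iUnion_mono fun i => ball_smul_subset_ball_smul (hx i).le h
  obtain ⟨c, hc⟩ := hAb.isCompact_closure.elim_directed_cover _
    (fun c => isOpen_iUnion fun i => isOpen_ball) hcover hmono.directed_le
  have hpos : 0 < max c 1 := lt_max_of_lt_right one_pos
  refine ⟨fun i => max c 1 • x i, fun _ => max c 1, fun i => ⟨⟨_, hpos, rfl⟩, hpos, ?_⟩,
    subset_closure.trans (hc.trans (hmono (le_max_left c 1)))⟩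
  rw [norm_smul, hx i, mul_one, Real.norm_of_nonneg hpos.le]

/-- In a finite-dimensional space, if every selection of the
subdifferential mapping positively separates the closure of a bounded set A with
d(0,A) > 0, then A has a ball-covering by origin-avoiding balls centered on the
positive rays of the xᵢ. -/
theorem stmt13 {X : Type*} [NormedAddCommGroup X] [NormedSpace ℝ X]
    [FiniteDimensional ℝ X]
    (A : Set X) (hAb : Bornology.IsBounded A)
    (hd : ∃ δ : ℝ, 0 < δ ∧ ∀ a ∈ A, δ ≤ ‖a‖)
    (m : ℕ) (x : Fin m → X) (hx : ∀ i, ‖x i‖ = 1)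
    (hsep : ∀ φ : Fin m → (X →L[ℝ] ℝ),
      (∀ i, ‖φ i‖ = 1 ∧ φ i (x i) = ‖x i‖) → ∀ z ∈ closure A, ∃ i, 0 < φ i z) :
    ∃ (y : Fin m → X) (r : Fin m → ℝ),
      (∀ i, (∃ l : ℝ, 0 < l ∧ y i = l • x i) ∧ 0 < r i ∧ r i ≤ ‖y i‖) ∧
      A ⊆ ⋃ i, ball (y i) (r i) :=
  stmt13_general A hAb m x hx hsep
end

section
/- Let X be a real normed space and x, y ∈ X with x ≠ 0, and write y = βx + z. If for all sufficiently large λ > 0 one has ‖λx − y‖ ≥ λ‖x‖² − 1/λ (with ‖x‖ = 1), then ρ'₋(x, y) ≤ 0. -/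
open Metric Filter Set Topology

/-!
Substituting `l = -1/t` turns the hypothesis at large `l` into information at small negative `t`:
`x + t • y = (-t) • (l • x - y)`, so `‖x + t • y‖ ≥ (-t) (l ‖x‖² - 1/l) = ‖x‖² - t²`.
For `‖x‖ = 1` the left difference quotient is therefore at most `-t`, which tends to `0`.
-/

section

variable {X : Type*} [NormedAddCommGroup X] [NormedSpace ℝ X]

lemma norm_add_smul_of_neg (x y : X) {t : ℝ} (ht : t < 0) :
    ‖x + t • y‖ = -t * ‖(-t⁻¹) • x - y‖ := by
  have hxy : x + t • y = (-t) • ((-t⁻¹) • x - y) := by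
    rw [smul_sub, smul_smul, neg_mul_neg, mul_inv_cancel₀ ht.ne, one_smul, neg_smul,
      sub_neg_eq_add]
  rw [hxy, norm_smul, Real.norm_eq_abs, abs_of_pos (neg_pos.2 ht)]

lemma eventually_norm_sq_sub_sq_le_norm_add_smul {x y : X}
    (h : ∀ᶠ l in atTop, l * ‖x‖ ^ 2 - 1 / l ≤ ‖l • x - y‖) :
    ∀ᶠ t in 𝓝[<] (0 : ℝ), ‖x‖ ^ 2 - t ^ 2 ≤ ‖x + t • y‖ := by
  have hl : Tendsto (fun t : ℝ => -t⁻¹) (𝓝[<] 0) atTop :=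
    tendsto_neg_atBot_atTop.comp tendsto_inv_nhdsLT_zero
  filter_upwards [hl.eventually h, self_mem_nhdsWithin] with t hbound (ht : t < 0)
  rw [norm_add_smul_of_neg x y ht]
  calc ‖x‖ ^ 2 - t ^ 2 = -t * (-t⁻¹ * ‖x‖ ^ 2 - 1 / -t⁻¹) := by field_simp [ht.ne]; ring
    _ ≤ -t * ‖(-t⁻¹) • x - y‖ := mul_le_mul_of_nonneg_left hbound (neg_nonneg.2 ht.le)

lemma eventually_norm_diffQuotient_le_neg {x y : X} (hx : ‖x‖ = 1)
    (h : ∀ᶠ l in atTop, l * ‖x‖ ^ 2 - 1 / l ≤ ‖l • x - y‖) :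
    ∀ᶠ t in 𝓝[<] (0 : ℝ), ‖x‖ * (‖x + t • y‖ - ‖x‖) / t ≤ -t := by
  filter_upwards [eventually_norm_sq_sub_sq_le_norm_add_smul h, self_mem_nhdsWithin]
    with t hnorm (ht : t < 0)
  rw [hx] at hnorm ⊢
  rw [one_mul, div_le_iff_of_neg ht]
  nlinarith

end

theorem stmt18_general {X : Type*} [NormedAddCommGroup X] [NormedSpace ℝ X]
    (x y : X) (hx : ‖x‖ = 1)
    (hbig : ∃ Λ : ℝ, 0 < Λ ∧ ∀ l : ℝ, Λ ≤ l → l * ‖x‖ ^ 2 - 1 / l ≤ ‖l • x - y‖) :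
    ∀ ρm : ℝ,
      Tendsto (fun t : ℝ => ‖x‖ * (‖x + t • y‖ - ‖x‖) / t) (𝓝[<] (0 : ℝ)) (𝓝 ρm) →
      ρm ≤ 0 := by
  intro ρm hρ
  obtain ⟨Λ, -, hΛ⟩ := hbig
  have hneg : Tendsto (fun t : ℝ => -t) (𝓝[<] 0) (𝓝 0) := by
    simpa using (continuous_neg.tendsto (0 : ℝ)).mono_left nhdsWithin_le_nhds
  exact le_of_tendsto_of_tendsto hρ hneg
    (eventually_norm_diffQuotient_le_neg hx (eventually_atTop.2 ⟨Λ, hΛ⟩))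

/-- If ‖x‖ = 1, y = βx + z, and for all sufficiently large λ > 0 one has
‖λx − y‖ ≥ λ‖x‖² − 1/λ, then ρ'₋(x, y) ≤ 0. -/
theorem stmt18 {X : Type*} [NormedAddCommGroup X] [NormedSpace ℝ X]
    (x y z : X) (β : ℝ) (hx : ‖x‖ = 1) (hy : y = β • x + z)
    (hbig : ∃ Λ : ℝ, 0 < Λ ∧ ∀ l : ℝ, Λ ≤ l → l * ‖x‖ ^ 2 - 1 / l ≤ ‖l • x - y‖) :
    ∀ ρm : ℝ,
      Tendsto (fun t : ℝ => ‖x‖ * (‖x + t • y‖ - ‖x‖) / t) (𝓝[<] (0 : ℝ)) (𝓝 ρm) →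
      ρm ≤ 0 :=
  stmt18_general x y hx hbig
end
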